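/- arXiv:2108.01484 — 2 statements merged into one kernel-verified Lean document; each statement's English description precedes it below -/
import Mathlib

section
/- Let m, n be integers with 2 ≤ n ≤ 3 and 0 ≤ m < n. There exist absolute constants C > 0 and H₀ such that the following holds. Let P, Q be integer polynomials with no common non-constant factor, where P has degree exactly n and satisfies P(0) = 0, Q is nonzero of degree m, and max{H(P), H(Q)} ≤ H for some H ≥ H₀. Let c_n be the leading coefficient of P and d₀ = Q(0) (which is nonzero). Then the number of prime numbers ℓ > 0 for which ℓ·P + Q is reducible is at most C·τ(c_n)·τ(d₀)·log H / log log H, and the same bound holds for the number of prime numbers ℓ > 0 for which P + ℓ·Q is reducible. -/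
/-!
For `deg P ≤ 3`, a reducible member of either pencil has a linear factor, hence a rational root
`x = k / e` with `k` dividing its constant and `e` its leading coefficient: `d₀` and `ℓ cₙ` for
`ℓP + Q`, `ℓ d₀` and `cₙ` for `P + ℓQ`. Writing `P = X P₁`, the root satisfies
`μ P₁(x) + Q(x) = 0` with `μ = ℓx` (resp. `μ = x/ℓ`), and `ℓ` is recovered as `μ/x` (resp. `x/μ`).
As `ℓ` is prime, one of `x`, `μ` is a fraction `k/e` with `k ∣ d₀`, `e ∣ cₙ`. A given `x` fixes
`μ`, and a given `μ` allows at most two `x`, since coprimality of `P` and `Q` makes `μ P₁ + Q` a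
nonzero polynomial of degree at most two. So at most `12 τ(cₙ) τ(d₀)` primes occur, and
`log H / log log H ≥ 1` once `H ≥ e^e`.
-/

open Polynomial Filter

/-- Naive height of an integer polynomial: the maximum absolute value of its coefficients. -/
noncomputable def pH (P : Polynomial ℤ) : ℝ :=
  ((P.support.sup fun i => (P.coeff i).natAbs : ℕ) : ℝ)

/-- Number of positive divisors of an integer (via its absolute value). -/
def tauD (N : ℤ) : ℕ := N.natAbs.divisors.card

/-- An integer polynomial is "reducible" in the sense of the paper: it has a non-constant
integer polynomial factor of strictly smaller degree. -/
def HasProperFactor (P : Polynomial ℤ) : Prop :=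
  ∃ A : Polynomial ℤ, 0 < A.natDegree ∧ A.natDegree < P.natDegree ∧ A ∣ P

/-- Two integer polynomials have no common non-constant factor. -/
def NoCommonFactor (P Q : Polynomial ℤ) : Prop :=
  ∀ A : Polynomial ℤ, A ∣ P → A ∣ Q → A.natDegree = 0

/-- `w_{=n}^*(ξ)`: supremum of all `w` such that `0 < |ξ − α| ≤ H(α)^{−w−1}` holds for
infinitely many real algebraic numbers `α` of degree exactly `n`. -/
noncomputable def wExactStar (n : ℕ) (ξ : ℝ) : EReal :=
  sSup {x : EReal | ∃ w : ℝ, x = (w : EReal) ∧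
    {α : ℝ | ∃ P : Polynomial ℤ, Irreducible P ∧ P.natDegree = n ∧
      Polynomial.aeval α P = 0 ∧ 0 < |ξ - α| ∧ |ξ - α| ≤ pH P ^ (-w - 1)}.Infinite}

/-- `ŵ_n(ξ)`: supremum of all `w` such that for every sufficiently large `X` the system
`H(P) ≤ X`, `0 < |P(ξ)| ≤ X^{−w}` has a solution in integer polynomials of degree at most `n`. -/
noncomputable def wHat (n : ℕ) (ξ : ℝ) : EReal :=
  sSup {x : EReal | ∃ w : ℝ, x = (w : EReal) ∧
    ∀ᶠ X : ℝ in atTop, ∃ P : Polynomial ℤ, P.natDegree ≤ n ∧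
      pH P ≤ X ∧ 0 < |Polynomial.aeval ξ P| ∧ |Polynomial.aeval ξ P| ≤ X ^ (-w)}

/-- `w_{=n}(ξ)`: supremum of all `w` such that for arbitrarily large `X` the system
`H(P) ≤ X`, `0 < |P(ξ)| ≤ X^{−w}` has a solution in irreducible integer polynomials of
degree exactly `n`. -/
noncomputable def wExact (n : ℕ) (ξ : ℝ) : EReal :=
  sSup {x : EReal | ∃ w : ℝ, x = (w : EReal) ∧
    ∃ᶠ X : ℝ in atTop, ∃ P : Polynomial ℤ, Irreducible P ∧ P.natDegree = n ∧
      pH P ≤ X ∧ 0 < |Polynomial.aeval ξ P| ∧ |Polynomial.aeval ξ P| ≤ X ^ (-w)}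

/-- `w_{=n}^{int}(ξ)`: as `w_{=n}(ξ)` but with irreducible *monic* integer polynomials. -/
noncomputable def wExactInt (n : ℕ) (ξ : ℝ) : EReal :=
  sSup {x : EReal | ∃ w : ℝ, x = (w : EReal) ∧
    ∃ᶠ X : ℝ in atTop, ∃ P : Polynomial ℤ, Irreducible P ∧ P.Monic ∧ P.natDegree = n ∧
      pH P ≤ X ∧ 0 < |Polynomial.aeval ξ P| ∧ |Polynomial.aeval ξ P| ≤ X ^ (-w)}

/-- `w_{=n}^{*int}(ξ)`: supremum of all `w` such that `0 < |ξ − α| ≤ H(α)^{−w−1}` holds for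
infinitely many real algebraic integers `α` of degree exactly `n`. -/
noncomputable def wExactStarInt (n : ℕ) (ξ : ℝ) : EReal :=
  sSup {x : EReal | ∃ w : ℝ, x = (w : EReal) ∧
    {α : ℝ | ∃ P : Polynomial ℤ, Irreducible P ∧ P.Monic ∧ P.natDegree = n ∧
      Polynomial.aeval α P = 0 ∧ 0 < |ξ - α| ∧ |ξ - α| ≤ pH P ^ (-w - 1)}.Infinite}

/-- `w_{=n}^{u}(ξ)`: as `w_{=n}(ξ)` but with irreducible monic integer polynomials with
constant coefficient `±1`. -/
noncomputable def wExactU (n : ℕ) (ξ : ℝ) : EReal :=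
  sSup {x : EReal | ∃ w : ℝ, x = (w : EReal) ∧
    ∃ᶠ X : ℝ in atTop, ∃ P : Polynomial ℤ, Irreducible P ∧ P.Monic ∧
      (P.coeff 0 = 1 ∨ P.coeff 0 = -1) ∧ P.natDegree = n ∧
      pH P ≤ X ∧ 0 < |Polynomial.aeval ξ P| ∧ |Polynomial.aeval ξ P| ≤ X ^ (-w)}

/-- `w_{=n}^{*u}(ξ)`: supremum of all `w` such that `0 < |ξ − α| ≤ H(α)^{−w−1}` holds for
infinitely many real algebraic units `α` of degree exactly `n`. -/
noncomputable def wExactStarU (n : ℕ) (ξ : ℝ) : EReal :=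
  sSup {x : EReal | ∃ w : ℝ, x = (w : EReal) ∧
    {α : ℝ | ∃ P : Polynomial ℤ, Irreducible P ∧ P.Monic ∧
      (P.coeff 0 = 1 ∨ P.coeff 0 = -1) ∧ P.natDegree = n ∧
      Polynomial.aeval α P = 0 ∧ 0 < |ξ - α| ∧ |ξ - α| ≤ pH P ^ (-w - 1)}.Infinite}

section Pencil

open Finset

variable {K : Type*} [Field K] {p q : K[X]}

theorem IsCoprime.eval_ne_zero_of_eval_eq_zero (hpq : IsCoprime p q) {x : K}
    (hq : q.eval x = 0) : p.eval x ≠ 0 := by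
  obtain ⟨a, b, hab⟩ := hpq
  intro hp
  simpa [hp, hq] using congrArg (eval x) hab

theorem IsCoprime.C_mul_add_ne_zero (hpq : IsCoprime p q) (hp : 0 < p.natDegree) (μ : K) :
    C μ * p + q ≠ 0 := by
  intro h
  rw [add_eq_zero_iff_eq_neg'] at h
  rw [h, IsCoprime.neg_right_iff] at hpq
  exact hp.ne' (natDegree_eq_zero_of_isUnit (isCoprime_self.1 hpq.of_mul_right_right))

variable [DecidableEq K]

/-- For coprime `p`, `q`, this contains every point `(x, μ)` of the curve `μ p(x) + q(x) = 0`
with `x ∈ S` or `μ ∈ S`. -/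
noncomputable def pencilRoots (p q : K[X]) (S : Finset K) : Finset (K × K) :=
  S.image (fun x => (x, -q.eval x / p.eval x)) ∪
    S.biUnion fun μ => (C μ * p + q).roots.toFinset.image fun x => (x, μ)

theorem card_pencilRoots_le {d : ℕ} (hp : p.natDegree ≤ d) (hq : q.natDegree ≤ d)
    (S : Finset K) : (pencilRoots p q S).card ≤ (d + 1) * S.card := by
  have hroots (μ : K) : ((C μ * p + q).roots.toFinset.image fun x => (x, μ)).card ≤ d :=
    calc _ ≤ (C μ * p + q).roots.toFinset.card := card_image_le
      _ ≤ (C μ * p + q).natDegree := (Multiset.toFinset_card_le _).trans (card_roots' _)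
      _ ≤ d := natDegree_add_le_of_degree_le (natDegree_C_mul_le _ _ |>.trans hp) hq
  calc (pencilRoots p q S).card ≤ S.card + ∑ _μ ∈ S, d :=
        (card_union_le _ _).trans
          (add_le_add card_image_le (card_biUnion_le.trans (sum_le_sum fun μ _ => hroots μ)))
    _ = (d + 1) * S.card := by rw [sum_const, smul_eq_mul]; ring

theorem mem_pencilRoots (hpq : IsCoprime p q) (hp : 0 < p.natDegree) {S : Finset K} {x μ : K}
    (h : μ * p.eval x + q.eval x = 0) (hS : x ∈ S ∨ μ ∈ S) : (x, μ) ∈ pencilRoots p q S := by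
  rcases hS with hx | hμ
  · have hpx : p.eval x ≠ 0 := fun hpx =>
      hpq.eval_ne_zero_of_eval_eq_zero (by simpa [hpx] using h) hpx
    refine mem_union_left _ (mem_image.2 ⟨x, hx, ?_⟩)
    rw [Prod.mk.injEq, div_eq_iff hpx]
    exact ⟨rfl, by linear_combination -h⟩
  · refine mem_union_right _ (mem_biUnion.2 ⟨μ, hμ, mem_image.2 ⟨x, ?_, rfl⟩⟩)
    rw [Multiset.mem_toFinset, mem_roots (hpq.C_mul_add_ne_zero hp μ)]
    simpa using h

end Pencil

section RationalRoots

open Finset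

theorem Int.card_divisors_eq_two_mul_tauD (z : ℤ) : z.divisors.card = 2 * tauD z := by
  rw [Int.divisors, card_disjUnion, card_map, card_map, tauD, two_mul]

/-- By the rational root theorem, the rational roots of an integer polynomial with leading
coefficient `c` and constant coefficient `d` lie among these fractions. -/
def ratRootCandidates (c d : ℤ) : Finset ℚ :=
  (d.divisors ×ˢ c.divisors).image fun ke => (ke.1 : ℚ) / ke.2

theorem card_ratRootCandidates_le (c d : ℤ) :
    (ratRootCandidates c d).card ≤ 4 * tauD c * tauD d :=
  calc _ ≤ (d.divisors ×ˢ c.divisors).card := card_image_le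
    _ = 4 * tauD c * tauD d := by
      rw [card_product, Int.card_divisors_eq_two_mul_tauD, Int.card_divisors_eq_two_mul_tauD]
      ring

theorem div_mem_ratRootCandidates {c d k e : ℤ} (hc : c ≠ 0) (hd : d ≠ 0) (hk : k ∣ d)
    (he : e ∣ c) : (k / e : ℚ) ∈ ratRootCandidates c d :=
  mem_image.2 ⟨(k, e), mem_product.2 ⟨Int.mem_divisors.2 ⟨hk, hd⟩, Int.mem_divisors.2 ⟨he, hc⟩⟩,
    rfl⟩

theorem exists_eq_div_of_aeval_eq_zero {R : ℤ[X]} {x : ℚ} (hx : aeval x R = 0) :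
    ∃ k e : ℤ, k ∣ R.coeff 0 ∧ e ∣ R.leadingCoeff ∧ x = k / e :=
  ⟨IsFractionRing.num ℤ x, IsFractionRing.den ℤ x, num_dvd_of_is_root hx, den_dvd_of_is_root hx,
    by simpa using (IsFractionRing.mk'_num_den' ℤ x).symm⟩

theorem exists_aeval_eq_zero_of_natDegree_eq_one {F : ℤ[X]} (hF : F.natDegree = 1) :
    ∃ x : ℚ, aeval x F = 0 := by
  have hdeg : (F.map (algebraMap ℤ ℚ)).degree = 1 := by
    rw [degree_map_eq_of_injective (IsFractionRing.injective ℤ ℚ),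
      degree_eq_natDegree (by rintro rfl; simp at hF), hF, Nat.cast_one]
  obtain ⟨x, hx⟩ := exists_root_of_degree_eq_one hdeg
  exact ⟨x, by rwa [IsRoot, eval_map_algebraMap] at hx⟩

theorem exists_aeval_eq_zero_of_hasProperFactor {R : ℤ[X]} (hR : R.natDegree ≤ 3)
    (h : HasProperFactor R) : ∃ x : ℚ, aeval x R = 0 := by
  obtain ⟨A, hA0, hAR, B, rfl⟩ := h
  have hA : A ≠ 0 := by rintro rfl; simp at hA0
  have hB : B ≠ 0 := by rintro rfl; simp at hAR
  rw [natDegree_mul hA hB] at hAR hR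
  rcases (by omega : A.natDegree = 1 ∨ B.natDegree = 1) with h1 | h1
  · obtain ⟨x, hx⟩ := exists_aeval_eq_zero_of_natDegree_eq_one h1
    exact ⟨x, by rw [map_mul, hx, zero_mul]⟩
  · obtain ⟨x, hx⟩ := exists_aeval_eq_zero_of_natDegree_eq_one h1
    exact ⟨x, by rw [map_mul, hx, mul_zero]⟩

end RationalRoots

theorem NoCommonFactor.isCoprime_map {P Q : ℤ[X]} (h : NoCommonFactor P Q) (hP : P ≠ 0) :
    IsCoprime (P.map (algebraMap ℤ ℚ)) (Q.map (algebraMap ℤ ℚ)) := by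
  have hinj := IsFractionRing.injective ℤ ℚ
  refine EuclideanDomain.isCoprime_of_dvd
    (fun h0 => hP ((Polynomial.map_eq_zero_iff hinj).1 h0.1)) fun z hz z0 hzP hzQ => ?_
  -- Gauss's lemma lifts the common factor `z` to a primitive common factor in `ℤ[X]`.
  set Z := (IsLocalization.integerNormalization (nonZeroDivisors ℤ) z).primPart
  have hZ : Z.IsPrimitive := isPrimitive_primPart _
  obtain ⟨b, hb, hbz⟩ := IsLocalization.integerNormalization_spec (nonZeroDivisors ℤ) z
  have hZz : Z.map (algebraMap ℤ ℚ) ∣ z := by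
    have hb0 : (b : ℚ) ≠ 0 := by exact_mod_cast nonZeroDivisors.ne_zero hb
    rw [← (isUnit_C.2 (isUnit_iff_ne_zero.2 hb0)).dvd_mul_left, ← smul_eq_C_mul]
    exact hbz ▸ Polynomial.map_dvd _ (primPart_dvd _)
  have hZ0 : Z.natDegree = 0 :=
    h Z (hZ.dvd_of_fraction_map_dvd_fraction_map (hZz.trans hzP))
      (hZ.dvd_of_fraction_map_dvd_fraction_map (hZz.trans hzQ))
  have hZunit : IsUnit Z := by
    rw [eq_C_of_natDegree_eq_zero hZ0] at hZ ⊢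
    exact isUnit_C.2 (hZ _ dvd_rfl)
  exact hz (isUnit_or_eq_zero_of_isUnit_integerNormalization_primPart (R := ℤ) z0 hZunit)

theorem Int.dvd_or_exists_eq_mul_of_dvd_prime_mul {ℓ : ℕ} (hℓ : ℓ.Prime) {e c : ℤ}
    (h : e ∣ ℓ * c) : e ∣ c ∨ ∃ e', e = ℓ * e' ∧ e' ∣ c := by
  by_cases hℓe : (ℓ : ℤ) ∣ e
  · obtain ⟨e', rfl⟩ := hℓe
    exact .inr ⟨e', rfl, (mul_dvd_mul_iff_left (by exact_mod_cast hℓ.ne_zero)).1 h⟩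
  · have hcop : IsCoprime (ℓ : ℤ) e :=
      (Nat.prime_iff_prime_int.1 hℓ).irreducible.coprime_iff_not_dvd.2 hℓe
    exact .inl (hcop.symm.dvd_of_dvd_mul_left h)

theorem Set.finite_and_ncard_le_of_forall_natCast_mem {T : Set ℕ} {W : Finset ℚ}
    (h : ∀ ℓ ∈ T, (ℓ : ℚ) ∈ W) : T.Finite ∧ T.ncard ≤ W.card := by
  have hinj : Set.InjOn (Nat.cast : ℕ → ℚ) T := Nat.cast_injective.injOn
  refine ⟨(W.finite_toSet.preimage Nat.cast_injective.injOn).subset h, ?_⟩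
  rw [← Set.ncard_coe_finset]
  exact Set.ncard_le_ncard_of_injOn _ h hinj W.finite_toSet

section IntegerPencil

variable {P Q : ℤ[X]}

theorem exists_root_of_hasProperFactor_smul_add (h3 : P.natDegree ≤ 3)
    (hQ : Q.natDegree < P.natDegree) (hP0 : P.coeff 0 = 0) {s t : ℤ} (hs : s ≠ 0)
    (h : HasProperFactor (s • P + t • Q)) :
    ∃ k e : ℤ, k ∣ t * Q.coeff 0 ∧ e ∣ s * P.leadingCoeff ∧
      (s : ℚ) * (k / e) * aeval ((k : ℚ) / e) P.divX + t * aeval ((k : ℚ) / e) Q = 0 := by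
  set R := s • P + t • Q
  have hP : P ≠ 0 := by rintro rfl; simp at hQ
  have hRn : R.coeff P.natDegree = s * P.leadingCoeff := by
    simp only [R, coeff_add, coeff_smul, coeff_eq_zero_of_natDegree_lt hQ, smul_eq_mul, mul_zero,
      add_zero, leadingCoeff]
  have hRdeg : R.natDegree = P.natDegree :=
    le_antisymm (natDegree_add_le_of_degree_le (natDegree_smul_le _ _)
        ((natDegree_smul_le _ _).trans hQ.le))
      (le_natDegree_of_ne_zero (by rw [hRn]; exact mul_ne_zero hs (leadingCoeff_ne_zero.2 hP)))
  have hPX (y : ℚ) : aeval y P = y * aeval y P.divX := by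
    conv_lhs => rw [← X_mul_divX_add P, hP0]
    simp
  obtain ⟨x, hx⟩ := exists_aeval_eq_zero_of_hasProperFactor (hRdeg ▸ h3) h
  obtain ⟨k, e, hk, he, rfl⟩ := exists_eq_div_of_aeval_eq_zero hx
  refine ⟨k, e, by simpa [R, hP0] using hk, by rwa [leadingCoeff, hRdeg, hRn] at he, ?_⟩
  rw [← hx]
  simp [R, hPX]
  ring

theorem finite_and_ncard_le_of_forall_mem_pencilRoots (h2 : 2 ≤ P.natDegree)
    (h3 : P.natDegree ≤ 3) (hQ : Q.natDegree < P.natDegree) (hPQ : NoCommonFactor P Q)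
    (hP0 : P.coeff 0 = 0) {T : Set ℕ} (g : ℚ × ℚ → ℚ)
    (hT : ∀ ℓ ∈ T, ∃ x μ : ℚ, μ * aeval x P.divX + aeval x Q = 0 ∧
      (x ∈ ratRootCandidates P.leadingCoeff (Q.coeff 0) ∨
        μ ∈ ratRootCandidates P.leadingCoeff (Q.coeff 0)) ∧ g (x, μ) = ℓ) :
    T.Finite ∧ T.ncard ≤ 12 * tauD P.leadingCoeff * tauD (Q.coeff 0) := by
  set S := ratRootCandidates P.leadingCoeff (Q.coeff 0)
  set p := P.divX.map (algebraMap ℤ ℚ)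
  set q := Q.map (algebraMap ℤ ℚ)
  have hinj := IsFractionRing.injective ℤ ℚ
  have hpq : IsCoprime p q := by
    have := hPQ.isCoprime_map (by rintro rfl; simp at h2)
    rw [← X_mul_divX_add P, hP0, C_0, add_zero, Polynomial.map_mul, map_X] at this
    exact this.of_mul_left_right
  have hp : p.natDegree = P.natDegree - 1 := by
    rw [natDegree_map_eq_of_injective hinj, natDegree_divX_eq_natDegree_tsub_one]
  have hq : q.natDegree = Q.natDegree := natDegree_map_eq_of_injective hinj _
  have hmem : ∀ ℓ ∈ T, (ℓ : ℚ) ∈ (pencilRoots p q S).image g := by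
    intro ℓ hℓ
    obtain ⟨x, μ, h, hS, hg⟩ := hT ℓ hℓ
    refine Finset.mem_image.2 ⟨(x, μ), mem_pencilRoots hpq (by omega) ?_ hS, hg⟩
    simpa only [p, q, eval_map_algebraMap] using h
  refine (Set.finite_and_ncard_le_of_forall_natCast_mem hmem).imp_right fun hT => ?_
  calc T.ncard ≤ (pencilRoots p q S).card := hT.trans Finset.card_image_le
    _ ≤ (2 + 1) * S.card := card_pencilRoots_le (by omega) (by omega) S
    _ ≤ (2 + 1) * (4 * tauD P.leadingCoeff * tauD (Q.coeff 0)) :=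
      Nat.mul_le_mul_left _ (card_ratRootCandidates_le _ _)
    _ = 12 * tauD P.leadingCoeff * tauD (Q.coeff 0) := by ring

theorem finite_and_ncard_le_of_hasProperFactor_natCast_smul_add (h2 : 2 ≤ P.natDegree)
    (h3 : P.natDegree ≤ 3) (hQ : Q.natDegree < P.natDegree) (hPQ : NoCommonFactor P Q)
    (hP0 : P.coeff 0 = 0) (hd0 : Q.coeff 0 ≠ 0) :
    {ℓ : ℕ | ℓ.Prime ∧ HasProperFactor ((ℓ : ℤ) • P + Q)}.Finite ∧
      {ℓ : ℕ | ℓ.Prime ∧ HasProperFactor ((ℓ : ℤ) • P + Q)}.ncard ≤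
        12 * tauD P.leadingCoeff * tauD (Q.coeff 0) := by
  refine finite_and_ncard_le_of_forall_mem_pencilRoots h2 h3 hQ hPQ hP0 (fun z => z.2 / z.1) ?_
  rintro ℓ ⟨hℓ, h⟩
  have hcn : P.leadingCoeff ≠ 0 := leadingCoeff_ne_zero.2 (by rintro rfl; simp at h2)
  have hℓ0 : (ℓ : ℤ) ≠ 0 := by exact_mod_cast hℓ.ne_zero
  obtain ⟨k, e, hk, he, hroot⟩ :=
    exists_root_of_hasProperFactor_smul_add h3 hQ hP0 (t := 1) hℓ0 (by rwa [one_smul])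
  rw [one_mul] at hk
  have hk0 : (k : ℚ) ≠ 0 := by exact_mod_cast ne_zero_of_dvd_ne_zero hd0 hk
  have he0 : (e : ℚ) ≠ 0 := by exact_mod_cast ne_zero_of_dvd_ne_zero (mul_ne_zero hℓ0 hcn) he
  refine ⟨k / e, ℓ * (k / e), by simpa using hroot, ?_, by field_simp⟩
  rcases Int.dvd_or_exists_eq_mul_of_dvd_prime_mul hℓ he with he' | ⟨e', rfl, he'⟩
  · exact .inl (div_mem_ratRootCandidates hcn hd0 hk he')
  · have hμ : (ℓ : ℚ) * (k / (ℓ * e' : ℤ)) = k / e' := by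
      push_cast at he0 ⊢
      field_simp [(mul_ne_zero_iff.1 he0).1]
    exact .inr (hμ ▸ div_mem_ratRootCandidates hcn hd0 hk he')

theorem finite_and_ncard_le_of_hasProperFactor_add_natCast_smul (h2 : 2 ≤ P.natDegree)
    (h3 : P.natDegree ≤ 3) (hQ : Q.natDegree < P.natDegree) (hPQ : NoCommonFactor P Q)
    (hP0 : P.coeff 0 = 0) (hd0 : Q.coeff 0 ≠ 0) :
    {ℓ : ℕ | ℓ.Prime ∧ HasProperFactor (P + (ℓ : ℤ) • Q)}.Finite ∧
      {ℓ : ℕ | ℓ.Prime ∧ HasProperFactor (P + (ℓ : ℤ) • Q)}.ncard ≤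
        12 * tauD P.leadingCoeff * tauD (Q.coeff 0) := by
  refine finite_and_ncard_le_of_forall_mem_pencilRoots h2 h3 hQ hPQ hP0 (fun z => z.1 / z.2) ?_
  rintro ℓ ⟨hℓ, h⟩
  have hcn : P.leadingCoeff ≠ 0 := leadingCoeff_ne_zero.2 (by rintro rfl; simp at h2)
  have hℓ0 : (ℓ : ℚ) ≠ 0 := by exact_mod_cast hℓ.ne_zero
  obtain ⟨k, e, hk, he, hroot⟩ :=
    exists_root_of_hasProperFactor_smul_add h3 hQ hP0 (s := 1) one_ne_zero (by rwa [one_smul])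
  rw [one_mul] at he
  have hk0 : (k : ℚ) ≠ 0 := by
    exact_mod_cast ne_zero_of_dvd_ne_zero (mul_ne_zero (by exact_mod_cast hℓ.ne_zero) hd0) hk
  have he0 : (e : ℚ) ≠ 0 := by exact_mod_cast ne_zero_of_dvd_ne_zero hcn he
  refine ⟨k / e, k / e / ℓ, ?_, ?_, by field_simp⟩
  · push_cast at hroot
    field_simp at hroot ⊢
    linear_combination hroot
  rcases Int.dvd_or_exists_eq_mul_of_dvd_prime_mul hℓ hk with hk' | ⟨k', rfl, hk'⟩
  · exact .inl (div_mem_ratRootCandidates hcn hd0 hk' he)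
  · have hμ : ((ℓ * k' : ℤ) : ℚ) / e / ℓ = k' / e := by
      push_cast
      field_simp
    exact .inr (hμ ▸ div_mem_ratRootCandidates hcn hd0 hk' he)

end IntegerPencil

theorem le_mul_log_div_log_log {H a b : ℝ} (hH : Real.exp (Real.exp 1) ≤ H) (hab : a ≤ b)
    (hb : 0 ≤ b) : a ≤ b * Real.log H / Real.log (Real.log H) := by
  have hlog : Real.exp 1 ≤ Real.log H :=
    (Real.le_log_iff_exp_le ((Real.exp_pos _).trans_le hH)).2 hH
  have hlog0 : 0 < Real.log H := (Real.exp_pos 1).trans_le hlog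
  have hloglog : 1 ≤ Real.log (Real.log H) := (Real.le_log_iff_exp_le hlog0).2 hlog
  have hratio : 1 ≤ Real.log H / Real.log (Real.log H) := by
    rw [one_le_div (by linarith)]
    linarith [Real.log_le_sub_one_of_pos hlog0]
  calc a ≤ b * (Real.log H / Real.log (Real.log H)) := hab.trans (le_mul_of_one_le_right hb hratio)
    _ = b * Real.log H / Real.log (Real.log H) := (mul_div_assoc _ _ _).symm

/-- **Theorem 1.7 (i).** For `n ∈ {2,3}`: absolute constants `C > 0`, `H₀` such that for
coprime `P, Q` with `deg P = n`, `P(0) = 0`, `deg Q = m < n`, heights `≤ H ≥ H₀`, the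
number of primes `ℓ` for which `ℓP + Q` (resp. `P + ℓQ`) is reducible is at most
`C·τ(cₙ)·τ(d₀)·log H / log log H`. -/
theorem stmt_10 :
    ∃ C : ℝ, 0 < C ∧ ∃ H₀ : ℝ, ∀ n m : ℕ, 2 ≤ n → n ≤ 3 → m < n →
      ∀ H : ℝ, H₀ ≤ H → ∀ P Q : Polynomial ℤ,
        NoCommonFactor P Q → P.natDegree = n → P.coeff 0 = 0 →
        Q ≠ 0 → Q.natDegree = m → pH P ≤ H → pH Q ≤ H →
        Q.coeff 0 ≠ 0 ∧
        ({ℓ : ℕ | ℓ.Prime ∧ HasProperFactor ((ℓ : ℤ) • P + Q)}.Finite ∧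
          (({ℓ : ℕ | ℓ.Prime ∧ HasProperFactor ((ℓ : ℤ) • P + Q)}.ncard : ℝ) ≤
            C * tauD P.leadingCoeff * tauD (Q.coeff 0) *
              Real.log H / Real.log (Real.log H))) ∧
        ({ℓ : ℕ | ℓ.Prime ∧ HasProperFactor (P + (ℓ : ℤ) • Q)}.Finite ∧
          (({ℓ : ℕ | ℓ.Prime ∧ HasProperFactor (P + (ℓ : ℤ) • Q)}.ncard : ℝ) ≤
            C * tauD P.leadingCoeff * tauD (Q.coeff 0) *
              Real.log H / Real.log (Real.log H))) := by
  refine ⟨12, by norm_num, Real.exp (Real.exp 1), ?_⟩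
  rintro n m hn2 hn3 hmn H hH P Q hPQ rfl hP0 - rfl - -
  have hd0 : Q.coeff 0 ≠ 0 := fun h => by
    simpa using hPQ X (X_dvd_iff.2 hP0) (X_dvd_iff.2 h)
  obtain ⟨hf₁, hc₁⟩ :=
    finite_and_ncard_le_of_hasProperFactor_natCast_smul_add hn2 hn3 hmn hPQ hP0 hd0
  obtain ⟨hf₂, hc₂⟩ :=
    finite_and_ncard_le_of_hasProperFactor_add_natCast_smul hn2 hn3 hmn hPQ hP0 hd0
  have hbound {k : ℕ} (hk : k ≤ 12 * tauD P.leadingCoeff * tauD (Q.coeff 0)) :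
      (k : ℝ) ≤ 12 * tauD P.leadingCoeff * tauD (Q.coeff 0) * Real.log H /
        Real.log (Real.log H) :=
    le_mul_log_div_log_log hH (by exact_mod_cast hk) (by positivity)
  exact ⟨hd0, ⟨hf₁, hbound hc₁⟩, ⟨hf₂, hbound hc₂⟩⟩
end

section
/- Let n ≥ 1 be an integer and w ≥ n a real number. Then max{ w/(w − n + 1), (3/2)·w − n + 1/2 } ≥ (n + √(n² + 16n − 8))/4. -/
open Polynomial Filter

/-! The first branch `w / (w - n + 1)` decreases and the second increases in `w`; they meet
where both equal the positive root `c` of `2c² - nc - 2n + 1 = 0`, i.e. `c = (n + √(n² + 16n - 8))/4`.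
So if the second branch is below `c`, then `w < (2c + 2n - 1)/3` and the first branch is at least `c`. -/

lemma le_max_of_two_mul_sq_sub_le {c n w : ℝ} (hc : 1 ≤ c)
    (hq : 2 * c ^ 2 - c * n - 2 * n + 1 ≤ 0) (hw : 0 < w - n + 1) :
    c ≤ max (w / (w - n + 1)) (3 / 2 * w - n + 1 / 2) := by
  rcases le_or_gt c (3 / 2 * w - n + 1 / 2) with h | h
  · exact le_max_of_le_right h
  · refine le_max_of_le_left ((le_div_iff₀ hw).2 ?_)
    nlinarith [mul_le_mul_of_nonneg_left h.le (sub_nonneg.2 hc)]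

lemma two_mul_sq_sub_eq_zero_of_sqrt {x : ℝ} (hx : 0 ≤ x ^ 2 + 16 * x - 8) :
    2 * ((x + √(x ^ 2 + 16 * x - 8)) / 4) ^ 2 - (x + √(x ^ 2 + 16 * x - 8)) / 4 * x
      - 2 * x + 1 = 0 := by
  nlinarith [Real.sq_sqrt hx]

lemma one_le_add_sqrt_div_four {x : ℝ} (hx : 1 ≤ x) :
    1 ≤ (x + √(x ^ 2 + 16 * x - 8)) / 4 := by
  have h3 : 3 ≤ √(x ^ 2 + 16 * x - 8) := Real.le_sqrt_of_sq_le (by nlinarith)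
  linarith

/-- The elementary optimization step in the deduction of Theorem 1.1: for `n ≥ 1` and
`w ≥ n`, `max{w/(w − n + 1), (3/2)w − n + 1/2} ≥ (n + √(n² + 16n − 8))/4`. -/
theorem stmt_18 (n : ℕ) (hn : 1 ≤ n) (w : ℝ) (hw : (n : ℝ) ≤ w) :
    max (w / (w - n + 1)) (3 / 2 * w - n + 1 / 2) ≥
      ((n : ℝ) + Real.sqrt ((n : ℝ) ^ 2 + 16 * n - 8)) / 4 := by
  have hn1 : (1 : ℝ) ≤ n := by exact_mod_cast hn
  exact le_max_of_two_mul_sq_sub_le (one_le_add_sqrt_div_four hn1)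
    (two_mul_sq_sub_eq_zero_of_sqrt (by nlinarith)).le (by linarith)
end
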